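/- Let O and A be Hermitian n×n complex matrices (n ≥ 1) and let α be a nonzero real number such that i·(O·A − A·O) = α·O. Then O = 0. -/
import Mathlib


/-- **Commutator identity (Lemma 2).** If `O` and `A` are Hermitian `n × n`
complex matrices and `α` is a nonzero real number such that
`i·(O·A − A·O) = α·O`, then `O = 0`. -/
theorem commutator_identity {n : ℕ} (hn : 1 ≤ n)
    (O A : Matrix (Fin n) (Fin n) ℂ)
    (hO : O.IsHermitian) (hA : A.IsHermitian)
    (α : ℝ) (hα : α ≠ 0)
    (h : Complex.I • (O * A - A * O) = (α : ℂ) • O) :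
    O = 0 := by
  have t1 : Matrix.trace (O * (Complex.I • (O * A - A * O)))
      = Matrix.trace (O * ((α : ℂ) • O)) := by rw [h]
  have t2 : Matrix.trace (O * (Complex.I • (O * A - A * O))) = 0 := by
    rw [Matrix.mul_smul, Matrix.trace_smul, mul_sub, ← Matrix.mul_assoc,
      ← Matrix.mul_assoc, Matrix.trace_sub, Matrix.trace_mul_cycle O A O,
      sub_self, smul_zero]
  have t3 : (α : ℂ) • Matrix.trace (O * O) = 0 := by
    rw [← Matrix.trace_smul, ← Matrix.mul_smul, ← t1, t2]
  rw [smul_eq_mul] at t3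
  have t4 : Matrix.trace (O * O) = 0 := by
    rcases mul_eq_zero.mp t3 with h' | h'
    · exact absurd (by exact_mod_cast h') hα
    · exact h'
  have t5 : (∑ i, ∑ j, (Complex.normSq (O i j) : ℂ)) = 0 := by
    rw [← t4]
    unfold Matrix.trace
    simp only [Matrix.diag, Matrix.mul_apply]
    refine Finset.sum_congr rfl fun i _ => Finset.sum_congr rfl fun j _ => ?_
    rw [show O j i = star (O i j) from by
      have := congrFun (congrFun hO j) i
      simpa [Matrix.conjTranspose_apply] using this.symm]
    rw [← Complex.mul_conj]
    rfl
  have t6 : (∑ i, ∑ j, Complex.normSq (O i j)) = 0 := by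
    exact_mod_cast t5
  ext i j
  have hnn : ∀ i ∈ (Finset.univ : Finset (Fin n)),
      (0:ℝ) ≤ ∑ j, Complex.normSq (O i j) :=
    fun i _ => Finset.sum_nonneg fun j _ => Complex.normSq_nonneg _
  have hi := (Finset.sum_eq_zero_iff_of_nonneg hnn).mp t6 i (Finset.mem_univ i)
  have hj := (Finset.sum_eq_zero_iff_of_nonneg
    (fun j _ => Complex.normSq_nonneg (O i j))).mp hi j (Finset.mem_univ j)
  simpa [Complex.normSq_eq_zero] using hj
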